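/- Claim (Algorithm 1 stops at a stationary point in the single-client full-gradient case, Appendix A.2 / Algorithm 2). Let f₁ : ℝ^d → ℝ be differentiable, g proper closed convex, and x⋆ a first-order stationary point, i.e., 0 ∈ ∇f₁(x⋆) + ∂g(x⋆) (equivalently x⋆ = P_β(x⋆ − β∇f₁(x⋆)) for every β > 0). Run Algorithm 1 with n = 1 client, full gradients, any τ ≥ 1, η > 0, η_g > 0, η̃ = τ·η·η_g, and initialization x̄^1 = x⋆ − η̃·∇f₁(x⋆) (so that P_{η̃}(x̄^1) = x⋆). Then for every round r ≥ 1 and every local step t ∈ {0,…,τ}: ẑ_{1,t}^r = x⋆ − t·η·∇f₁(x⋆), z_{1,t}^r = P_{tη}(ẑ_{1,t}^r) = x⋆, the server iterate satisfies x̄^{r+1} = x⋆ − η̃·∇f₁(x⋆), and the output satisfies P_{η̃}(x̄^{R+1}) = x⋆ for every R. -/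

import Mathlib

open RealInnerProductSpace

/-!
If `v` is a subgradient of `g` at `x` and `∇f₁(x) = -v`, then `x` is a fixed point of every
proximal gradient step: `P_β(x - β ∇f₁(x)) = x` for all `β ≥ 0`. Starting from
`P_{η̃}(x̄¹) = x⋆`, each local step therefore only translates `ẑ` by `-η ∇f₁(x⋆)` while the
proximal point `z` stays at `x⋆`, and the server update returns `x̄^{r+1}` to `x̄¹`.
-/

section Prox

variable {E : Type*} [NormedAddCommGroup E] [InnerProductSpace ℝ E]

/-- Expanding the square, the subgradient inequality turns the optimality of `p` into
`‖x - p‖² ≤ 0`. -/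
theorem eq_of_prox_objective_le {g : E → ℝ} {x v p : E} {β : ℝ} (hβ : 0 ≤ β)
    (hv : ∀ y, g x + ⟪v, y - x⟫ ≤ g y)
    (hp : β * g p + ‖x + β • v - p‖ ^ 2 / 2 ≤ β * g x + ‖x + β • v - x‖ ^ 2 / 2) :
    p = x := by
  have hexpand : ‖x + β • v - p‖ ^ 2 = ‖x - p‖ ^ 2 + 2 * (β * ⟪v, x - p⟫) + β ^ 2 * ‖v‖ ^ 2 := by
    rw [show x + β • v - p = (x - p) + β • v by abel, norm_add_sq_real, inner_smul_right,
      norm_smul, mul_pow, Real.norm_eq_abs, sq_abs, real_inner_comm]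
  have hshift : ‖x + β • v - x‖ ^ 2 = β ^ 2 * ‖v‖ ^ 2 := by
    rw [add_sub_cancel_left, norm_smul, mul_pow, Real.norm_eq_abs, sq_abs]
  have hsub : β * (g x - ⟪v, x - p⟫) ≤ β * g p := by
    refine mul_le_mul_of_nonneg_left ?_ hβ
    have := hv p
    rw [← neg_sub x p, inner_neg_right] at this
    linarith
  have hsq : ‖x - p‖ ^ 2 ≤ 0 := by
    rw [hexpand, hshift] at hp
    linarith
  exact (sub_eq_zero.mp (norm_eq_zero.mp
    ((pow_eq_zero_iff two_ne_zero).mp (le_antisymm hsq (sq_nonneg _))))).symm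

theorem prox_add_smul_subgradient_eq_self {g : E → ℝ} {prox : ℝ → E → E}
    (hprox0 : ∀ w, prox 0 w = w)
    (hprox : ∀ β : ℝ, 0 < β → ∀ w u,
      β * g (prox β w) + ‖w - prox β w‖ ^ 2 / 2 ≤ β * g u + ‖w - u‖ ^ 2 / 2)
    {x v : E} (hv : ∀ y, g x + ⟪v, y - x⟫ ≤ g y) {β : ℝ} (hβ : 0 ≤ β) :
    prox β (x + β • v) = x := by
  rcases hβ.eq_or_lt with rfl | hβ
  · rw [hprox0, zero_smul, add_zero]
  · exact eq_of_prox_objective_le hβ.le hv (hprox β hβ _ x)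

end Prox

theorem local_steps_of_prox_fixed_point {E : Type*} [AddCommGroup E] [Module ℝ E]
    {prox : ℝ → E → E} {F : E → E} {x : E} {τ : ℕ} {η : ℝ} (hη : 0 ≤ η)
    (hfix : ∀ β : ℝ, 0 ≤ β → prox β (x - β • F x) = x)
    {zhat z : ℕ → E} (hzhat0 : zhat 0 = x) (hz0 : z 0 = x)
    (hlocal : ∀ t, t < τ → zhat (t + 1) = zhat t - η • F (z t))
    (hproxstep : ∀ t, t < τ → z (t + 1) = prox (((t : ℝ) + 1) * η) (zhat (t + 1))) :
    ∀ t, t ≤ τ → zhat t = x - ((t : ℝ) * η) • F x ∧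
      z t = prox ((t : ℝ) * η) (zhat t) ∧ z t = x := by
  have hiter : ∀ t, t ≤ τ → zhat t = x - ((t : ℝ) * η) • F x ∧ z t = x := by
    intro t
    induction t with
    | zero => simp [hzhat0, hz0]
    | succ t ih =>
      intro ht
      obtain ⟨hzhat, hz⟩ := ih (Nat.le_of_succ_le ht)
      have hzhat' : zhat (t + 1) = x - (((t : ℝ) + 1) * η) • F x := by
        rw [hlocal t ht, hzhat, hz]
        module
      refine ⟨by rw [hzhat']; push_cast; rfl, ?_⟩
      rw [hproxstep t ht, hzhat']
      exact hfix _ (by positivity)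
  intro t ht
  obtain ⟨hzhat, hz⟩ := hiter t ht
  exact ⟨hzhat, by rw [hz, hzhat, hfix _ (by positivity)], hz⟩

theorem single_client_stops_at_stationary_point_general
    {d : ℕ} (τ : ℕ)
    (η ηg : ℝ) (hη : 0 < η) (hηg : 0 < ηg)
    (g : EuclideanSpace ℝ (Fin d) → ℝ)
    (Gf1 : EuclideanSpace ℝ (Fin d) → EuclideanSpace ℝ (Fin d))
    (prox : ℝ → EuclideanSpace ℝ (Fin d) → EuclideanSpace ℝ (Fin d))
    (hprox0 : ∀ w, prox 0 w = w)
    (hprox : ∀ β : ℝ, 0 < β → ∀ w u,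
      β * g (prox β w) + ‖w - prox β w‖ ^ 2 / 2 ≤ β * g u + ‖w - u‖ ^ 2 / 2)
    (xstar : EuclideanSpace ℝ (Fin d))
    (hstat : ∃ v, (∀ y, g xstar + ⟪v, y - xstar⟫ ≤ g y) ∧ Gf1 xstar + v = 0)
    (xbar : ℕ → EuclideanSpace ℝ (Fin d))
    (zhat z : ℕ → ℕ → EuclideanSpace ℝ (Fin d))
    (hinit : ∀ r, 1 ≤ r →
      zhat r 0 = prox ((τ : ℝ) * η * ηg) (xbar r) ∧ z r 0 = prox ((τ : ℝ) * η * ηg) (xbar r))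
    (hlocal : ∀ r, 1 ≤ r → ∀ t, t < τ → zhat r (t + 1) = zhat r t - η • Gf1 (z r t))
    (hproxstep : ∀ r, 1 ≤ r → ∀ t, t < τ → z r (t + 1) = prox (((t : ℝ) + 1) * η) (zhat r (t + 1)))
    (hserver : ∀ r, 1 ≤ r →
      xbar (r + 1) = prox ((τ : ℝ) * η * ηg) (xbar r)
        + ηg • (zhat r τ - prox ((τ : ℝ) * η * ηg) (xbar r)))
    (hx1 : xbar 1 = xstar - ((τ : ℝ) * η * ηg) • Gf1 xstar) :
    (∀ r, 1 ≤ r →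
        (∀ t, t ≤ τ →
          zhat r t = xstar - ((t : ℝ) * η) • Gf1 xstar ∧
            z r t = prox ((t : ℝ) * η) (zhat r t) ∧ z r t = xstar) ∧
        xbar (r + 1) = xstar - ((τ : ℝ) * η * ηg) • Gf1 xstar) ∧
      ∀ R : ℕ, prox ((τ : ℝ) * η * ηg) (xbar (R + 1)) = xstar := by
  obtain ⟨v, hv, hGv⟩ := hstat
  have hfix : ∀ β : ℝ, 0 ≤ β → prox β (xstar - β • Gf1 xstar) = xstar := by
    intro β hβ
    rw [eq_neg_of_add_eq_zero_left hGv, smul_neg, sub_neg_eq_add]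
    exact prox_add_smul_subgradient_eq_self hprox0 hprox hv hβ
  have hηtilde : (0 : ℝ) ≤ τ * η * ηg := by positivity
  have hround : ∀ r, 1 ≤ r → xbar r = xstar - ((τ : ℝ) * η * ηg) • Gf1 xstar →
      (∀ t, t ≤ τ → zhat r t = xstar - ((t : ℝ) * η) • Gf1 xstar ∧
          z r t = prox ((t : ℝ) * η) (zhat r t) ∧ z r t = xstar) ∧
        xbar (r + 1) = xstar - ((τ : ℝ) * η * ηg) • Gf1 xstar := by
    intro r hr hxr
    have hstart : prox ((τ : ℝ) * η * ηg) (xbar r) = xstar := hxr ▸ hfix _ hηtilde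
    obtain ⟨hzhat0, hz0⟩ := hinit r hr
    have hsteps := local_steps_of_prox_fixed_point hη.le hfix (hzhat0.trans hstart)
      (hz0.trans hstart) (hlocal r hr) (hproxstep r hr)
    refine ⟨hsteps, ?_⟩
    rw [hserver r hr, hstart, (hsteps τ le_rfl).1]
    module
  have hxbar : ∀ r, 1 ≤ r → xbar r = xstar - ((τ : ℝ) * η * ηg) • Gf1 xstar :=
    Nat.le_induction hx1 fun r hr ih => (hround r hr ih).2
  refine ⟨fun r hr => hround r hr (hxbar r hr), fun R => ?_⟩
  rw [hxbar (R + 1) (Nat.le_add_left 1 R)]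
  exact hfix _ hηtilde

/-- Algorithm 1 stops at a stationary point in the single-client full-gradient case. -/
theorem single_client_stops_at_stationary_point
    {d : ℕ} (hd : 0 < d) (τ : ℕ) (hτ : 1 ≤ τ)
    (η ηg : ℝ) (hη : 0 < η) (hηg : 0 < ηg)
    (f1 g : EuclideanSpace ℝ (Fin d) → ℝ)
    (Gf1 : EuclideanSpace ℝ (Fin d) → EuclideanSpace ℝ (Fin d))
    (hgrad : ∀ x, HasGradientAt f1 (Gf1 x) x)
    (hgconv : ConvexOn ℝ Set.univ g) (hgcont : Continuous g)
    (prox : ℝ → EuclideanSpace ℝ (Fin d) → EuclideanSpace ℝ (Fin d))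
    (hprox0 : ∀ w, prox 0 w = w)
    (hprox : ∀ β : ℝ, 0 < β → ∀ w u,
      β * g (prox β w) + ‖w - prox β w‖ ^ 2 / 2 ≤ β * g u + ‖w - u‖ ^ 2 / 2)
    (xstar : EuclideanSpace ℝ (Fin d))
    (hstat : ∃ v, (∀ y, g xstar + ⟪v, y - xstar⟫ ≤ g y) ∧ Gf1 xstar + v = 0)
    (xbar : ℕ → EuclideanSpace ℝ (Fin d))
    (zhat z : ℕ → ℕ → EuclideanSpace ℝ (Fin d))
    (hinit : ∀ r, 1 ≤ r →
      zhat r 0 = prox ((τ : ℝ) * η * ηg) (xbar r) ∧ z r 0 = prox ((τ : ℝ) * η * ηg) (xbar r))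
    (hlocal : ∀ r, 1 ≤ r → ∀ t, t < τ → zhat r (t + 1) = zhat r t - η • Gf1 (z r t))
    (hproxstep : ∀ r, 1 ≤ r → ∀ t, t < τ → z r (t + 1) = prox (((t : ℝ) + 1) * η) (zhat r (t + 1)))
    (hserver : ∀ r, 1 ≤ r →
      xbar (r + 1) = prox ((τ : ℝ) * η * ηg) (xbar r)
        + ηg • (zhat r τ - prox ((τ : ℝ) * η * ηg) (xbar r)))
    (hx1 : xbar 1 = xstar - ((τ : ℝ) * η * ηg) • Gf1 xstar) :
    (∀ r, 1 ≤ r →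
        (∀ t, t ≤ τ →
          zhat r t = xstar - ((t : ℝ) * η) • Gf1 xstar ∧
            z r t = prox ((t : ℝ) * η) (zhat r t) ∧ z r t = xstar) ∧
        xbar (r + 1) = xstar - ((τ : ℝ) * η * ηg) • Gf1 xstar) ∧
      ∀ R : ℕ, prox ((τ : ℝ) * η * ηg) (xbar (R + 1)) = xstar :=
  single_client_stops_at_stationary_point_general τ η ηg hη hηg g Gf1 prox hprox0 hprox xstar hstat
    xbar zhat z hinit hlocal hproxstep hserver hx1
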